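/- For every α > 0 and every x ∈ ℝ², the map R_α : ℝ² → Matrix (Fin 3) (Fin 3) ℝ defined by R_α(x) = 2 u_α(x)⊗u_α(x) − I₃, where u_α(x) = (α⁴ + ‖x‖²)⁻¹ · (2α²x₁, 2α²x₂, ‖x‖² − α⁴), is differentiable at x and satisfies ‖∂₁R_α(x)‖² + ‖∂₂R_α(x)‖² = 64α⁴/(α⁴ + ‖x‖²)² in the Frobenius norm. -/

import Mathlib

noncomputable section
open Matrix

/-- The rescaled inverse stereographic projection (degree-one bubble)
`u_α(x) = (α⁴ + ‖x‖²)⁻¹ (2α²x₁, 2α²x₂, ‖x‖² − α⁴)` from `ℝ²` to `ℝ³`. -/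
def bubble (α : ℝ) (x : EuclideanSpace ℝ (Fin 2)) : EuclideanSpace ℝ (Fin 3) :=
  (α ^ 4 + ‖x‖ ^ 2)⁻¹ •
    (WithLp.equiv 2 (Fin 3 → ℝ)).symm
      ![2 * α ^ 2 * x 0, 2 * α ^ 2 * x 1, ‖x‖ ^ 2 - α ^ 4]

/-- The outer product `q ⊗ v`, with entries `(q ⊗ v) i j = q i * v j`. -/
def outer (q v : EuclideanSpace ℝ (Fin 3)) : Matrix (Fin 3) (Fin 3) ℝ :=
  fun i j => q i * v j

/-- `R_α = F ∘ u_α`, where `F(q) = 2 q⊗q − I₃`. -/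
def Rbubble (α : ℝ) (x : EuclideanSpace ℝ (Fin 2)) : Matrix (Fin 3) (Fin 3) ℝ :=
  (2 : ℝ) • outer (bubble α x) (bubble α x) - 1

attribute [local instance] Matrix.frobeniusNormedAddCommGroup Matrix.frobeniusNormedSpace

private def Vf (α : ℝ) : Fin 3 → (EuclideanSpace ℝ (Fin 2) → ℝ) :=
  ![fun y => 2 * α ^ 2 * y 0, fun y => 2 * α ^ 2 * y 1, fun y => ‖y‖ ^ 2 - α ^ 4]

private def Fc (α : ℝ) (x : EuclideanSpace ℝ (Fin 2)) : Fin 3 → (EuclideanSpace ℝ (Fin 2) →L[ℝ] ℝ) :=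
  ![(2 * α ^ 2) • EuclideanSpace.proj 0, (2 * α ^ 2) • EuclideanSpace.proj 1,
    (2 * x 0) • EuclideanSpace.proj 0 + (2 * x 1) • EuclideanSpace.proj 1]

private lemma norm_sq_eq (y : EuclideanSpace ℝ (Fin 2)) : ‖y‖ ^ 2 = y 0 ^ 2 + y 1 ^ 2 := by
  rw [EuclideanSpace.norm_eq, Real.sq_sqrt (by positivity)]
  simp [Fin.sum_univ_two, sq_abs]

private lemma hproj (x : EuclideanSpace ℝ (Fin 2)) (k : Fin 2) :
    HasFDerivAt (𝕜 := ℝ) (fun y : EuclideanSpace ℝ (Fin 2) => (y k : ℝ))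
      (EuclideanSpace.proj k) x :=
  (EuclideanSpace.proj (𝕜 := ℝ) k).hasFDerivAt

private lemma hNder (α : ℝ) (x : EuclideanSpace ℝ (Fin 2)) :
    HasFDerivAt (fun y : EuclideanSpace ℝ (Fin 2) => ‖y‖ ^ 2) (Fc α x 2) x := by
  have h : (fun y : EuclideanSpace ℝ (Fin 2) => ‖y‖ ^ 2)
      = fun y => y 0 * y 0 + y 1 * y 1 := funext fun y => by rw [norm_sq_eq]; ring
  rw [h]
  refine (((hproj x 0).mul (hproj x 0)).add ((hproj x 1).mul (hproj x 1))).congr_fderiv ?_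
  ext v
  simp [Fc]
  ring

private lemma hVf (α : ℝ) (x : EuclideanSpace ℝ (Fin 2)) (i : Fin 3) :
    HasFDerivAt (Vf α i) (Fc α x i) x := by
  match i with
  | 0 =>
    show HasFDerivAt (fun y : EuclideanSpace ℝ (Fin 2) => 2 * α ^ 2 * y 0)
      ((2 * α ^ 2) • EuclideanSpace.proj 0) x
    exact (hproj x 0).const_mul (2 * α ^ 2)
  | 1 =>
    show HasFDerivAt (fun y : EuclideanSpace ℝ (Fin 2) => 2 * α ^ 2 * y 1)
      ((2 * α ^ 2) • EuclideanSpace.proj 1) x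
    exact (hproj x 1).const_mul (2 * α ^ 2)
  | 2 =>
    show HasFDerivAt (fun y : EuclideanSpace ℝ (Fin 2) => ‖y‖ ^ 2 - α ^ 4) (Fc α x 2) x
    exact (hNder α x).sub_const (α ^ 4)

private lemma hSder2 (α : ℝ) (x : EuclideanSpace ℝ (Fin 2)) :
    HasFDerivAt (fun y => α ^ 4 + ‖y‖ ^ 2) (Fc α x 2) x :=
  (hNder α x).const_add (α ^ 4)

private lemma entry_eq (α : ℝ) (y : EuclideanSpace ℝ (Fin 2)) (i j : Fin 3) :
    Rbubble α y i j =
      2 * ((α ^ 4 + ‖y‖ ^ 2)⁻¹ * Vf α i y) * ((α ^ 4 + ‖y‖ ^ 2)⁻¹ * Vf α j y)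
        - (if i = j then 1 else 0) := by
  have hb : ∀ k : Fin 3, bubble α y k = (α ^ 4 + ‖y‖ ^ 2)⁻¹ * Vf α k y := by
    intro k
    match k with
    | 0 => simp [bubble, Vf]
    | 1 => simp [bubble, Vf]
    | 2 => simp [bubble, Vf]
  simp only [Rbubble, Matrix.sub_apply, Matrix.smul_apply, Matrix.one_apply, outer, hb,
    smul_eq_mul]
  ring

private lemma keyD {α : ℝ} {x : EuclideanSpace ℝ (Fin 2)} (hs : α ^ 4 + ‖x‖ ^ 2 ≠ 0)
    {R f g : EuclideanSpace ℝ (Fin 2) → ℝ} {F G S : EuclideanSpace ℝ (Fin 2) →L[ℝ] ℝ}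
    (hS : HasFDerivAt (fun y => α ^ 4 + ‖y‖ ^ 2) S x)
    (hf : HasFDerivAt f F x) (hg : HasFDerivAt g G x) (c : ℝ)
    (hR : ∀ y, R y = 2 * ((α ^ 4 + ‖y‖ ^ 2)⁻¹ * f y) * ((α ^ 4 + ‖y‖ ^ 2)⁻¹ * g y) - c)
    (v : EuclideanSpace ℝ (Fin 2)) :
    DifferentiableAt ℝ R x ∧
      fderiv ℝ R x v =
        2 * ((F v * g x + f x * G v) * (α ^ 4 + ‖x‖ ^ 2) - 2 * f x * g x * S v)
          / (α ^ 4 + ‖x‖ ^ 2) ^ 3 := by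
  have hfun : R = fun y => 2 * ((α ^ 4 + ‖y‖ ^ 2)⁻¹ * f y) * ((α ^ 4 + ‖y‖ ^ 2)⁻¹ * g y) - c :=
    funext hR
  subst hfun
  have hinv : HasFDerivAt (fun y => (α ^ 4 + ‖y‖ ^ 2)⁻¹)
      ((-(ContinuousLinearMap.mulLeftRight ℝ ℝ (α ^ 4 + ‖x‖ ^ 2)⁻¹ (α ^ 4 + ‖x‖ ^ 2)⁻¹)).comp S) x :=
    (hasFDerivAt_inv' hs).comp x hS
  have H := (((hinv.mul hf).const_mul 2).mul (hinv.mul hg)).sub_const c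
  refine ⟨H.differentiableAt, ?_⟩
  rw [(show HasFDerivAt (fun y => 2 * ((α ^ 4 + ‖y‖ ^ 2)⁻¹ * f y) * ((α ^ 4 + ‖y‖ ^ 2)⁻¹ * g y) - c) _ x from H).fderiv]
  simp only [ContinuousLinearMap.add_apply, ContinuousLinearMap.smul_apply,
    ContinuousLinearMap.comp_apply, ContinuousLinearMap.neg_apply,
    ContinuousLinearMap.mulLeftRight_apply, smul_eq_mul, Pi.mul_apply]
  field_simp
  ring

private def eMat : (Fin 3 → Fin 3 → ℝ) ≃ₗ[ℝ] Matrix (Fin 3) (Fin 3) ℝ where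
  toFun M := M
  invFun M := M
  map_add' _ _ := rfl
  map_smul' _ _ := rfl
  left_inv _ := rfl
  right_inv _ := rfl

private lemma frob_sq (M : Matrix (Fin 3) (Fin 3) ℝ) :
    ‖M‖ ^ 2 = ∑ i, ∑ j, (M i j) ^ 2 := by
  have h1 : (0:ℝ) ≤ ∑ i, ∑ j, ‖M i j‖ ^ (2:ℝ) := by positivity
  rw [Matrix.frobenius_norm_def, ← Real.rpow_natCast _ 2, ← Real.rpow_mul h1]
  norm_num

/-- `R_α = 2 u_α ⊗ u_α − I₃` is differentiable with Frobenius energy density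
`‖∂₁R_α‖² + ‖∂₂R_α‖² = 64α⁴/(α⁴ + ‖x‖²)²`. -/
theorem Rbubble_energy_density (α : ℝ) (hα : 0 < α) (x : EuclideanSpace ℝ (Fin 2)) :
    DifferentiableAt ℝ (Rbubble α) x ∧
      ‖fderiv ℝ (Rbubble α) x (EuclideanSpace.single 0 1)‖ ^ 2 +
          ‖fderiv ℝ (Rbubble α) x (EuclideanSpace.single 1 1)‖ ^ 2 =
        64 * α ^ 4 / (α ^ 4 + ‖x‖ ^ 2) ^ 2 := by
  have hs : α ^ 4 + ‖x‖ ^ 2 ≠ 0 := by positivity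
  have key' : ∀ (i j : Fin 3) (v : EuclideanSpace ℝ (Fin 2)),
      DifferentiableAt ℝ (fun y => Rbubble α y i j) x ∧
        fderiv ℝ (fun y => Rbubble α y i j) x v =
          2 * ((Fc α x i v * Vf α j x + Vf α i x * Fc α x j v) * (α ^ 4 + ‖x‖ ^ 2)
              - 2 * Vf α i x * Vf α j x * Fc α x 2 v) / (α ^ 4 + ‖x‖ ^ 2) ^ 3 :=
    fun i j v => keyD hs (hSder2 α x) (hVf α x i) (hVf α x j) _
      (fun y => entry_eq α y i j) v
  have hg : DifferentiableAt ℝ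
      (fun y : EuclideanSpace ℝ (Fin 2) => (fun i j => Rbubble α y i j : Fin 3 → Fin 3 → ℝ)) x :=
    differentiableAt_pi.2 fun i => differentiableAt_pi.2 fun j => (key' i j 0).1
  let e : (Fin 3 → Fin 3 → ℝ) ≃L[ℝ] Matrix (Fin 3) (Fin 3) ℝ :=
    eMat.toContinuousLinearEquiv
  have hfdiff : DifferentiableAt ℝ (Rbubble α) x := by
    have h := (e.differentiableAt).comp x hg
    exact h
  refine ⟨hfdiff, ?_⟩
  have hEval : ∀ (i j : Fin 3) (v : EuclideanSpace ℝ (Fin 2)),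
      fderiv ℝ (Rbubble α) x v i j = fderiv ℝ (fun y => Rbubble α y i j) x v := by
    intro i j v
    let E : Matrix (Fin 3) (Fin 3) ℝ →L[ℝ] ℝ :=
      LinearMap.toContinuousLinearMap ⟨⟨fun M => M i j, fun _ _ => rfl⟩, fun _ _ => rfl⟩
    have h2 := (E.hasFDerivAt.comp x hfdiff.hasFDerivAt).fderiv
    have h3 : fderiv ℝ (fun y => Rbubble α y i j) x = E.comp (fderiv ℝ (Rbubble α) x) := h2
    rw [h3]
    rfl
  have hsum : ∀ v : EuclideanSpace ℝ (Fin 2),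
      ‖fderiv ℝ (Rbubble α) x v‖ ^ 2 =
        ∑ i, ∑ j, (2 * ((Fc α x i v * Vf α j x + Vf α i x * Fc α x j v) * (α ^ 4 + ‖x‖ ^ 2)
              - 2 * Vf α i x * Vf α j x * Fc α x 2 v) / (α ^ 4 + ‖x‖ ^ 2) ^ 3) ^ 2 := by
    intro v
    rw [frob_sq]
    refine Finset.sum_congr rfl fun i _ => Finset.sum_congr rfl fun j _ => ?_
    rw [hEval i j v, (key' i j v).2]
  rw [hsum, hsum]
  have hx0 : ∀ (k l : Fin 2), (EuclideanSpace.single (k : Fin 2) (1:ℝ)) l = if l = k then 1 else 0 :=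
    fun k l => EuclideanSpace.single_apply k 1 l
  simp only [Fin.sum_univ_three, Vf, Fc, ContinuousLinearMap.add_apply,
    ContinuousLinearMap.smul_apply, smul_eq_mul, Matrix.cons_val_zero, Matrix.cons_val_one,
    Matrix.head_cons, Matrix.cons_val_two, Matrix.tail_cons, PiLp.proj_apply,
    EuclideanSpace.single_apply]
  rw [norm_sq_eq x]
  norm_num
  field_simp
  ring
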